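/- Let u ∈ W^{1,∞}(Ω) ∩ C(cl(Ω)) be differentiable at x₀ ∈ Ω, with gradient Du(x₀). Then H(x₀, Du(x₀)) ≤ H(x₀, Du)(x₀). -/

import Mathlib

open Set Filter Topology MeasureTheory
open scoped Pointwise ENNReal

noncomputable section

abbrev Euc (d : ℕ) := EuclideanSpace ℝ (Fin d)

structure SupSetup (d : ℕ) where
  Ω : Set (Euc d)
  H : Euc d → Euc d → ℝ
  isOpen_Ω : IsOpen Ω
  isBounded_Ω : Bornology.IsBounded Ω
  isConnected_Ω : IsConnected Ω
  H_nonneg : ∀ x ∈ Ω, ∀ p : Euc d, 0 ≤ H x p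
  H_zero : ∀ x ∈ Ω, H x 0 = 0
  H_quasiconvex : ∀ x ∈ Ω, ∀ lam : ℝ, Convex ℝ {p : Euc d | H x p ≤ lam}
  H_coercive : ∀ lam : ℝ, ∃ M : ℝ, 0 ≤ M ∧ ∀ x ∈ Ω, ∀ p : Euc d, H x p ≤ lam → ‖p‖ ≤ M
  H_cont : ContinuousOn (fun z : Euc d × Euc d => H z.1 z.2) (Ω ×ˢ (univ : Set (Euc d)))
  H_D : ∀ lam mu : ℝ, 0 ≤ mu → mu < lam → ∃ α > (0:ℝ), ∀ x ∈ Ω,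
      {p : Euc d | H x p ≤ mu} + Metric.ball (0 : Euc d) α ⊆ {p : Euc d | H x p ≤ lam}
  H_E : ∀ β > (0:ℝ), ∀ lam > (0:ℝ), ∀ V : Set (Euc d), IsOpen V → closure V ⊆ Ω →
      ∃ δ > (0:ℝ), ∀ lam' : ℝ, |lam - lam'| < δ → ∀ x ∈ V,
        {p : Euc d | H x p < lam} ⊆ {p : Euc d | H x p < lam'} + Metric.ball (0 : Euc d) β

variable {d : ℕ}

/-- The quasi-convex conjugate `L_λ(x,q) = sup { p·q : H(x,p) ≤ λ }`. -/
def Lfun (S : SupSetup d) (lam : ℝ) (x q : Euc d) : ℝ :=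
  sSup ((fun p : Euc d => (inner ℝ p q : ℝ)) '' {p : Euc d | S.H x p ≤ lam})

/-- A Lipschitz path from `x` to `y` with image (on `[0,1]`) inside `A`. -/
def IsPathIn (A : Set (Euc d)) (x y : Euc d) (γ : ℝ → Euc d) : Prop :=
  (∃ K : NNReal, LipschitzWith K γ) ∧ (∀ t ∈ Icc (0:ℝ) 1, γ t ∈ A) ∧ γ 0 = x ∧ γ 1 = y

/-- The energy `∫₀¹ L_λ(γ(t), γ'(t)) dt` of a path. -/
def energy (S : SupSetup d) (lam : ℝ) (γ : ℝ → Euc d) : ℝ :=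
  ∫ t in Ioo (0:ℝ) 1, Lfun S lam (γ t) (deriv γ t)

/-- The pseudo-distance `d_λ` on `Ω`. -/
def pdist (S : SupSetup d) (lam : ℝ) (x y : Euc d) : ℝ≥0∞ :=
  ⨅ (γ : ℝ → Euc d) (_ : IsPathIn S.Ω x y γ), ENNReal.ofReal (energy S lam γ)

/-- The extension of the pseudo-distance `d_λ` to the closure of `Ω`. -/
def pdistCl (S : SupSetup d) (lam : ℝ) (x y : Euc d) : ℝ≥0∞ :=
  ⨅ (xs : ℕ → Euc d) (ys : ℕ → Euc d) (_ : ∀ n, xs n ∈ S.Ω) (_ : ∀ n, ys n ∈ S.Ω)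
    (_ : Tendsto xs atTop (𝓝 x)) (_ : Tendsto ys atTop (𝓝 y)),
    Filter.liminf (fun n => pdist S lam (xs n) (ys n)) atTop

/-- `u ∈ W^{1,∞}(Ω)`: a uniform bound on the a.e. gradient, encoded as uniform local
Lipschitz continuity. -/
def W1inf (Ω : Set (Euc d)) (u : Euc d → ℝ) : Prop :=
  ∃ K : NNReal, ∀ x ∈ Ω, ∃ ε > (0:ℝ), Metric.ball x ε ⊆ Ω ∧
    LipschitzOnWith K u (Metric.ball x ε)

/-- `u ∈ W^{1,∞}(Ω) ∩ C(cl Ω)`. -/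
def W1infC (S : SupSetup d) (u : Euc d → ℝ) : Prop :=
  W1inf S.Ω u ∧ ContinuousOn u (closure S.Ω)

/-- The supremal functional `F(u) = esssup_{x ∈ Ω} H(x, Du(x))`. -/
def Fval (S : SupSetup d) (u : Euc d → ℝ) : ℝ :=
  essSup (fun x => S.H x (gradient u x)) (volume.restrict S.Ω)

/-- The supremal functional localized on `V`. -/
def FvalOn (S : SupSetup d) (V : Set (Euc d)) (u : Euc d → ℝ) : ℝ :=
  essSup (fun x => S.H x (gradient u x)) (volume.restrict V)

/-- Admissible competitor for problem (P) with boundary datum `g`. -/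
def IsAdmissible (S : SupSetup d) (g u : Euc d → ℝ) : Prop :=
  W1infC S u ∧ ∀ x ∈ frontier S.Ω, u x = g x

/-- Minimizer of problem (P). -/
def IsMinimizer (S : SupSetup d) (g u : Euc d → ℝ) : Prop :=
  IsAdmissible S g u ∧ ∀ v : Euc d → ℝ, IsAdmissible S g v → Fval S u ≤ Fval S v

/-- Absolute minimizer of problem (P). -/
def IsAbsMinimizer (S : SupSetup d) (g u : Euc d → ℝ) : Prop :=
  IsAdmissible S g u ∧
  ∀ V : Set (Euc d), IsOpen V → V.Nonempty → closure V ⊆ S.Ω →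
    ∀ v : Euc d → ℝ,
      (W1inf V v ∧ ContinuousOn v (closure V)) →
      (∀ x ∈ frontier V, v x = u x) →
      FvalOn S V u ≤ FvalOn S V v

/-- The set of `λ ≥ 0` such that `g(y) - g(x) ≤ d_λ(x,y)` for all boundary points. -/
def bLam (S : SupSetup d) (g : Euc d → ℝ) : Set ℝ :=
  {lam : ℝ | 0 ≤ lam ∧ ∀ x ∈ frontier S.Ω, ∀ y ∈ frontier S.Ω,
    ENNReal.ofReal (g y - g x) ≤ pdistCl S lam x y}

/-- `μ = inf bLam`. -/
def muVal (S : SupSetup d) (g : Euc d → ℝ) : ℝ := sInf (bLam S g)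

/-- `S⁻_λ(g)(x) = sup_{y ∈ ∂Ω} (g(y) - d_λ(x,y))`, as an extended real number. -/
def SminusE (S : SupSetup d) (g : Euc d → ℝ) (lam : ℝ) (x : Euc d) : EReal :=
  sSup {r : EReal | ∃ y ∈ frontier S.Ω, r = (g y : EReal) - ((pdistCl S lam x y : ℝ≥0∞) : EReal)}

/-- `S⁺_λ(g)(x) = inf_{y ∈ ∂Ω} (g(y) + d_λ(y,x))`, as an extended real number. -/
def SplusE (S : SupSetup d) (g : Euc d → ℝ) (lam : ℝ) (x : Euc d) : EReal :=
  sInf {r : EReal | ∃ y ∈ frontier S.Ω, r = (g y : EReal) + ((pdistCl S lam y x : ℝ≥0∞) : EReal)}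

/-- `μ(x₀,r) = inf {λ ≥ 0 : u(x) - u(x₀) ≤ d_λ(x₀,x) on B(x₀,r)}`. -/
def muFun (S : SupSetup d) (u : Euc d → ℝ) (x₀ : Euc d) (r : ℝ) : ℝ :=
  sInf {lam : ℝ | 0 ≤ lam ∧ ∀ x ∈ Metric.ball x₀ r,
    ENNReal.ofReal (u x - u x₀) ≤ pdist S lam x₀ x}

/-- The pointwise value `H(x₀, Du)(x₀) = inf_{0 < r < dist(x₀,∂Ω)} μ(x₀,r)`. -/
def Hof (S : SupSetup d) (u : Euc d → ℝ) (x₀ : Euc d) : ℝ :=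
  sInf (muFun S u x₀ '' Ioo 0 (Metric.infDist x₀ (frontier S.Ω)))

/-- The attainment set `A(w) = {x ∈ Ω : H(x,Dw)(x) = esssup H(·,Dw(·))}`. -/
def Aset (S : SupSetup d) (w : Euc d → ℝ) : Set (Euc d) :=
  {x ∈ S.Ω | Hof S w x = Fval S w}

/-- The `d_λ`-length of a curve (allowed to touch the boundary), computed with
the extended pseudo-distance. -/
def dlength (S : SupSetup d) (lam : ℝ) (γ : ℝ → Euc d) : ℝ≥0∞ :=
  ⨆ (n : ℕ) (t : Fin (n + 1) → ℝ) (_ : Monotone t) (_ : t 0 = 0) (_ : t (Fin.last n) = 1),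
    ∑ i : Fin n, pdistCl S lam (γ (t i.castSucc)) (γ (t i.succ))

/-- The `d_λ`-length of a curve inside `Ω`. -/
def dlenIn (S : SupSetup d) (lam : ℝ) (γ : ℝ → Euc d) : ℝ≥0∞ :=
  ⨆ (n : ℕ) (t : Fin (n + 1) → ℝ) (_ : Monotone t) (_ : t 0 = 0) (_ : t (Fin.last n) = 1),
    ∑ i : Fin n, pdist S lam (γ (t i.castSucc)) (γ (t i.succ))

section Helpers

open Metric

variable {d : ℕ}

lemma lfun_bddAbove (S : SupSetup d) {x : Euc d} {lam M : ℝ}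
    (hM : ∀ p : Euc d, S.H x p ≤ lam → ‖p‖ ≤ M) (q : Euc d) :
    BddAbove ((fun p : Euc d => (inner ℝ p q : ℝ)) '' {p : Euc d | S.H x p ≤ lam}) := by
  refine ⟨M * ‖q‖, ?_⟩
  rintro r ⟨p, hp, rfl⟩
  calc (inner ℝ p q : ℝ) ≤ ‖p‖ * ‖q‖ := real_inner_le_norm p q
    _ ≤ M * ‖q‖ := mul_le_mul_of_nonneg_right (hM p hp) (norm_nonneg q)

lemma lfun_bddAbove' (S : SupSetup d) {x : Euc d} (hx : x ∈ S.Ω) (lam : ℝ) (q : Euc d) :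
    BddAbove ((fun p : Euc d => (inner ℝ p q : ℝ)) '' {p : Euc d | S.H x p ≤ lam}) := by
  obtain ⟨M, -, hM⟩ := S.H_coercive lam
  exact lfun_bddAbove S (fun p hp => hM x hx p hp) q

lemma inner_le_lfun (S : SupSetup d) {x : Euc d} (hx : x ∈ S.Ω) {lam : ℝ} {p : Euc d}
    (hp : S.H x p ≤ lam) (q : Euc d) : (inner ℝ p q : ℝ) ≤ Lfun S lam x q :=
  le_csSup (lfun_bddAbove' S hx lam q) ⟨p, hp, rfl⟩

lemma zero_mem_subl (S : SupSetup d) {x : Euc d} (hx : x ∈ S.Ω) {lam : ℝ} (hlam : 0 ≤ lam) :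
    S.H x 0 ≤ lam := by rw [S.H_zero x hx]; exact hlam

lemma lfun_nonneg (S : SupSetup d) {x : Euc d} (hx : x ∈ S.Ω) {lam : ℝ} (hlam : 0 ≤ lam)
    (q : Euc d) : 0 ≤ Lfun S lam x q := by
  have := inner_le_lfun S hx (zero_mem_subl S hx hlam) q
  simpa using this

lemma lfun_le (S : SupSetup d) {x : Euc d} (hx : x ∈ S.Ω) {lam : ℝ} (hlam : 0 ≤ lam)
    {q : Euc d} {c : ℝ} (hc : ∀ p : Euc d, S.H x p ≤ lam → (inner ℝ p q : ℝ) ≤ c) :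
    Lfun S lam x q ≤ c := by
  have hne : ((fun p : Euc d => (inner ℝ p q : ℝ)) '' {p : Euc d | S.H x p ≤ lam}).Nonempty :=
    ⟨_, ⟨(0 : Euc d), zero_mem_subl S hx hlam, rfl⟩⟩
  apply csSup_le hne
  rintro r ⟨p, hp, rfl⟩
  exact hc p hp

lemma lfun_le_mul (S : SupSetup d) {x : Euc d} (hx : x ∈ S.Ω) {lam : ℝ} (hlam : 0 ≤ lam)
    {M : ℝ} (hM0 : 0 ≤ M) (hM : ∀ p : Euc d, S.H x p ≤ lam → ‖p‖ ≤ M) (q : Euc d) :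
    Lfun S lam x q ≤ M * ‖q‖ :=
  lfun_le S hx hlam fun p hp =>
    (real_inner_le_norm p q).trans (mul_le_mul_of_nonneg_right (hM p hp) (norm_nonneg q))

lemma H_contAt (S : SupSetup d) {x : Euc d} (hx : x ∈ S.Ω) (p : Euc d) :
    ContinuousAt (fun z : Euc d × Euc d => S.H z.1 z.2) (x, p) :=
  S.H_cont.continuousAt ((S.isOpen_Ω.prod isOpen_univ).mem_nhds ⟨hx, trivial⟩)

lemma H_cont_x (S : SupSetup d) {x : Euc d} (hx : x ∈ S.Ω) :
    Continuous (fun p : Euc d => S.H x p) := by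
  rw [continuous_iff_continuousAt]
  intro p
  exact (H_contAt S hx p).comp ((continuous_const.prodMk continuous_id).continuousAt)

lemma tube (S : SupSetup d) {x₁ : Euc d} (hx : x₁ ∈ S.Ω) {lam : ℝ} {A : Set (Euc d)}
    (hA : IsCompact A) (hHA : ∀ p ∈ A, lam < S.H x₁ p) :
    ∃ ρ > (0:ℝ), ∀ x : Euc d, dist x x₁ < ρ → ∀ p ∈ A, lam < S.H x p := by
  set n : Set (Euc d × Euc d) :=
    (S.Ω ×ˢ (univ : Set (Euc d))) ∩ (fun z : Euc d × Euc d => S.H z.1 z.2) ⁻¹' Ioi lam with hn_def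
  have hn : IsOpen n :=
    S.H_cont.isOpen_inter_preimage (S.isOpen_Ω.prod isOpen_univ) isOpen_Ioi
  have hsub : ({x₁} ×ˢ A) ⊆ n := by
    rintro ⟨a, b⟩ ⟨ha, hb⟩
    simp only [mem_singleton_iff] at ha
    subst ha
    exact ⟨⟨hx, trivial⟩, hHA b hb⟩
  obtain ⟨U, V, hU, hV, hxU, hAV, hUV⟩ := generalized_tube_lemma isCompact_singleton hA hn hsub
  obtain ⟨ρ, hρ, hball⟩ := Metric.isOpen_iff.1 hU x₁ (hxU rfl)
  refine ⟨ρ, hρ, fun x hx' p hp => ?_⟩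
  have : (x, p) ∈ n := hUV ⟨hball (mem_ball.2 hx'), hAV hp⟩
  exact this.2

lemma lfun_usc (S : SupSetup d) {x₁ : Euc d} (hx : x₁ ∈ S.Ω) {lam : ℝ} (hlam : 0 ≤ lam)
    (q₁ : Euc d) {c : ℝ} (hc : Lfun S lam x₁ q₁ < c) :
    ∃ ρ > (0:ℝ), ∀ x ∈ S.Ω, dist x x₁ < ρ → ∀ q : Euc d, dist q q₁ < ρ →
      Lfun S lam x q < c := by
  obtain ⟨M, hM0, hM⟩ := S.H_coercive lam
  set L := Lfun S lam x₁ q₁ with hL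
  set m := (c + L)/2 with hm
  have hLm : L < m := by rw [hm]; linarith
  have hmc : m < c := by rw [hm]; linarith
  set A := closedBall (0:Euc d) M ∩ {p : Euc d | m ≤ (inner ℝ p q₁ : ℝ)} with hA_def
  have hAcomp : IsCompact A :=
    (isCompact_closedBall _ _).inter_right
      (isClosed_le continuous_const (continuous_id.inner continuous_const))
  have hHA : ∀ p ∈ A, lam < S.H x₁ p := by
    rintro p ⟨-, hpm⟩
    by_contra hcon
    push_neg at hcon
    have := inner_le_lfun S hx hcon q₁
    simp only [mem_setOf_eq] at hpm
    linarith
  obtain ⟨ρ₀, hρ₀, htube⟩ := tube S hx hAcomp hHA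
  set δ := (c - L)/(2*(M+1)) with hδ_def
  have hcL : 0 < c - L := by linarith
  have hM1 : (0:ℝ) < M + 1 := by linarith
  have hδ : 0 < δ := by positivity
  refine ⟨min ρ₀ δ, lt_min hρ₀ hδ, fun x hxΩ hxd q hqd => ?_⟩
  have hbound : ∀ p : Euc d, S.H x p ≤ lam → (inner ℝ p q : ℝ) ≤ m + M * δ := by
    intro p hp
    have hpM : ‖p‖ ≤ M := hM x hxΩ p hp
    have hpm : (inner ℝ p q₁ : ℝ) < m := by
      by_contra hge
      push_neg at hge
      have := htube x (lt_of_lt_of_le hxd (min_le_left _ _)) p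
        ⟨mem_closedBall_zero_iff.2 hpM, hge⟩
      exact absurd hp (not_le.2 this)
    have h1 : (inner ℝ p (q - q₁) : ℝ) = (inner ℝ p q : ℝ) - (inner ℝ p q₁ : ℝ) := inner_sub_right p q q₁
    have h2 : (inner ℝ p (q - q₁) : ℝ) ≤ M * δ := by
      calc (inner ℝ p (q - q₁) : ℝ) ≤ ‖p‖ * ‖q - q₁‖ := real_inner_le_norm _ _
        _ ≤ M * δ := by
            apply mul_le_mul hpM ?_ (norm_nonneg _) hM0
            rw [← dist_eq_norm]
            exact le_of_lt (lt_of_lt_of_le hqd (min_le_right _ _))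
    linarith
  have hle : Lfun S lam x q ≤ m + M * δ := lfun_le S hxΩ hlam hbound
  have hlt : m + M * δ < c := by
    have hδeq : δ * (2*(M+1)) = c - L := by
      rw [hδ_def]; field_simp
    have h2 : M * δ < (M+1) * δ := by nlinarith
    nlinarith
  linarith

end Helpers
section Helpers2

open Metric

variable {d : ℕ}

lemma lfun_isOpen (S : SupSetup d) {lam : ℝ} (hlam : 0 ≤ lam) (c : ℝ) :
    IsOpen {z : Euc d × Euc d | z.1 ∈ S.Ω ∧ Lfun S lam z.1 z.2 < c} := by
  rw [Metric.isOpen_iff]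
  rintro ⟨x, q⟩ ⟨hx, hc⟩
  obtain ⟨ρ, hρ, hρ'⟩ := lfun_usc S hx hlam q hc
  obtain ⟨ρ₁, hρ₁, hballΩ⟩ := Metric.isOpen_iff.1 S.isOpen_Ω x hx
  refine ⟨min ρ ρ₁, lt_min hρ hρ₁, ?_⟩
  rintro ⟨y, w⟩ hyw
  rw [mem_ball, Prod.dist_eq] at hyw
  have h1 : dist y x < min ρ ρ₁ := lt_of_le_of_lt (le_max_left _ _) hyw
  have h2 : dist w q < min ρ ρ₁ := lt_of_le_of_lt (le_max_right _ _) hyw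
  have hyΩ : y ∈ S.Ω := hballΩ (mem_ball.2 (h1.trans_le (min_le_right _ _)))
  exact ⟨hyΩ, hρ' y hyΩ (h1.trans_le (min_le_left _ _)) w (h2.trans_le (min_le_left _ _))⟩

lemma norm_deriv_le_lip {E : Type*} [NormedAddCommGroup E] [NormedSpace ℝ E]
    {γ : ℝ → E} {K : NNReal} (hγ : LipschitzWith K γ) (t : ℝ) : ‖deriv γ t‖ ≤ K := by
  by_cases h : DifferentiableAt ℝ γ t
  · exact norm_deriv_le_of_lipschitz hγ
  · rw [deriv_zero_of_not_differentiableAt h]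
    simp

lemma g_integrableOn (S : SupSetup d) {lam : ℝ} (hlam : 0 ≤ lam) {γ : ℝ → Euc d} {K : NNReal}
    (hγ : LipschitzWith K γ) (hmem : ∀ t ∈ Icc (0:ℝ) 1, γ t ∈ S.Ω) :
    IntegrableOn (fun t => Lfun S lam (γ t) (deriv γ t)) (Ioo (0:ℝ) 1) := by
  obtain ⟨M, hM0, hM⟩ := S.H_coercive lam
  set g : ℝ → ℝ := fun t => Lfun S lam (γ t) (deriv γ t) with hg_def
  set m : ℝ → Euc d × Euc d := fun t => (γ t, deriv γ t) with hm_def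
  have hmeas : Measurable m := (hγ.continuous.measurable).prodMk (measurable_deriv γ)
  set g' : ℝ → ℝ := fun t => if t ∈ Ioo (0:ℝ) 1 then g t else 0 with hg'_def
  have hg'meas : Measurable g' := by
    apply measurable_of_Iio
    intro c
    have hU : IsOpen {z : Euc d × Euc d | z.1 ∈ S.Ω ∧ Lfun S lam z.1 z.2 < c} :=
      lfun_isOpen S hlam c
    have hpre : g' ⁻¹' (Iio c) =
        (Ioo (0:ℝ) 1 ∩ m ⁻¹' {z : Euc d × Euc d | z.1 ∈ S.Ω ∧ Lfun S lam z.1 z.2 < c}) ∪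
          (if 0 < c then (Ioo (0:ℝ) 1)ᶜ else ∅) := by
      ext t
      simp only [mem_preimage, mem_Iio, mem_union, mem_inter_iff, mem_setOf_eq]
      by_cases ht : t ∈ Ioo (0:ℝ) 1
      · have hΩ := hmem t (Ioo_subset_Icc_self ht)
        rw [hg'_def]
        simp only [if_pos ht]
        constructor
        · intro h; exact Or.inl ⟨ht, hΩ, h⟩
        · rintro (⟨-, -, h⟩ | hbad)
          · exact h
          · split_ifs at hbad with hc
            · exact absurd ht hbad
            · exact absurd hbad (notMem_empty t)
      · rw [hg'_def]
        simp only [if_neg ht]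
        constructor
        · intro h0
          right
          rw [if_pos h0]
          exact ht
        · rintro (⟨hbad, -⟩ | h2)
          · exact absurd hbad ht
          · by_contra hc0
            rw [if_neg hc0] at h2
            exact absurd h2 (notMem_empty t)
    rw [hpre]
    apply MeasurableSet.union
    · exact measurableSet_Ioo.inter (hmeas hU.measurableSet)
    · split_ifs
      · exact measurableSet_Ioo.compl
      · exact MeasurableSet.empty
  have heq : g' =ᵐ[volume.restrict (Ioo (0:ℝ) 1)] g := by
    rw [Filter.eventuallyEq_iff_exists_mem]
    exact ⟨Ioo (0:ℝ) 1, self_mem_ae_restrict measurableSet_Ioo,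
      fun t ht => by rw [hg'_def]; simp only [if_pos ht]⟩
  have hae : AEStronglyMeasurable g (volume.restrict (Ioo (0:ℝ) 1)) :=
    (hg'meas.aemeasurable.congr heq).aestronglyMeasurable
  have hconst : IntegrableOn (fun _ : ℝ => M * (K:ℝ)) (Ioo (0:ℝ) 1) :=
    integrableOn_const (by simp [Real.volume_Ioo])
  refine hconst.mono' hae ?_
  rw [MeasureTheory.ae_restrict_iff' measurableSet_Ioo]
  apply Filter.Eventually.of_forall
  intro t ht
  have htΩ : γ t ∈ S.Ω := hmem t (Ioo_subset_Icc_self ht)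
  have h0 : 0 ≤ g t := lfun_nonneg S htΩ hlam _
  have h1 : g t ≤ M * ‖deriv γ t‖ := lfun_le_mul S htΩ hlam hM0 (fun p hp => hM _ htΩ p hp) _
  rw [Real.norm_eq_abs, abs_of_nonneg h0]
  calc g t ≤ M * ‖deriv γ t‖ := h1
    _ ≤ M * (K:ℝ) := mul_le_mul_of_nonneg_left (norm_deriv_le_lip hγ t) hM0

end Helpers2
section Helpers3

open Metric

lemma key_ftc {h g : ℝ → ℝ} {C : ℝ} (hC : 0 ≤ C)
    (hlip : ∀ s t : ℝ, |h s - h t| ≤ C * |s - t|)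
    (hg_int : IntegrableOn g (Ioo (0:ℝ) 1))
    (hgC : ∀ t ∈ Ioo (0:ℝ) 1, g t ≤ C)
    (hquot : ∀ᵐ t ∂(volume.restrict (Ioo (0:ℝ) 1)), ∀ ε > (0:ℝ),
      ∀ᶠ s in 𝓝[>] (0:ℝ), h (t + s) - h t ≤ (g t + ε) * s) :
    h 1 - h 0 ≤ ∫ t in Ioo (0:ℝ) 1, g t := by
  set sn : ℕ → ℝ := fun n => 1/(n+1) with hsn_def
  have hsn_pos : ∀ n, 0 < sn n := fun n => by positivity
  have hsn_lim : Tendsto sn atTop (𝓝 0) := tendsto_one_div_add_atTop_nhds_zero_nat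
  have hh_cont : Continuous h := by
    have hlw : LipschitzWith C.toNNReal h := by
      apply LipschitzWith.of_dist_le_mul
      intro s t
      rw [Real.dist_eq, Real.dist_eq, Real.coe_toNNReal C hC]
      exact hlip s t
    exact hlw.continuous
  set φ : ℕ → ℝ → ℝ := fun n t => (h (t + sn n) - h t)/(sn n) with hφ_def
  have hφ_cont : ∀ n, Continuous (φ n) := fun n =>
    ((hh_cont.comp (continuous_id.add continuous_const)).sub hh_cont).div_const _
  have hφ_leC : ∀ n t, φ n t ≤ C := by
    intro n t
    rw [hφ_def]
    dsimp only
    rw [div_le_iff₀ (hsn_pos n)]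
    calc h (t + sn n) - h t ≤ |h (t + sn n) - h t| := le_abs_self _
      _ ≤ C * |t + sn n - t| := hlip _ _
      _ = C * sn n := by rw [add_sub_cancel_left, abs_of_pos (hsn_pos n)]
  set F : ℕ → ℝ → ℝ≥0∞ := fun n t => ENNReal.ofReal (C - φ n t) with hF_def
  have hF_meas : ∀ n, Measurable (F n) := fun n =>
    ENNReal.measurable_ofReal.comp (measurable_const.sub (hφ_cont n).measurable)
  have step_a : ∀ᵐ t ∂(volume.restrict (Ioo (0:ℝ) 1)),
      ENNReal.ofReal (C - g t) ≤ liminf (fun n => F n t) atTop := by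
    filter_upwards [hquot] with t ht
    apply ENNReal.le_of_forall_pos_le_add
    intro ε hε _
    have hεR : (0:ℝ) < (ε:ℝ) := by exact_mod_cast hε
    have hsn_mem : Tendsto sn atTop (𝓝[>] (0:ℝ)) := by
      apply tendsto_nhdsWithin_of_tendsto_nhds_of_eventually_within _ hsn_lim
      exact Filter.Eventually.of_forall (fun n => hsn_pos n)
    have hev : ∀ᶠ n in atTop, φ n t ≤ g t + (ε:ℝ) := by
      filter_upwards [hsn_mem.eventually (ht (ε:ℝ) hεR)] with n hn
      rw [hφ_def]
      dsimp only
      rw [div_le_iff₀ (hsn_pos n)]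
      exact hn
    have h1 : ENNReal.ofReal (C - (g t + (ε:ℝ))) ≤ liminf (fun n => F n t) atTop := by
      calc ENNReal.ofReal (C - (g t + (ε:ℝ)))
          = liminf (fun _ : ℕ => ENNReal.ofReal (C - (g t + (ε:ℝ)))) atTop :=
            (Filter.liminf_const _).symm
        _ ≤ liminf (fun n => F n t) atTop :=
            Filter.liminf_le_liminf (by
              filter_upwards [hev] with n hn
              exact ENNReal.ofReal_le_ofReal (by linarith))
    calc ENNReal.ofReal (C - g t) = ENNReal.ofReal ((C - (g t + (ε:ℝ))) + (ε:ℝ)) := by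
          congr 1; ring
      _ ≤ ENNReal.ofReal (C - (g t + (ε:ℝ))) + ENNReal.ofReal (ε:ℝ) := ENNReal.ofReal_add_le
      _ ≤ liminf (fun n => F n t) atTop + (ε:ℝ≥0∞) := by
          exact add_le_add h1 (le_of_eq ENNReal.ofReal_coe_nnreal)
  have fatou : ∫⁻ t in Ioo (0:ℝ) 1, ENNReal.ofReal (C - g t) ≤
      liminf (fun n => ∫⁻ t in Ioo (0:ℝ) 1, F n t) atTop :=
    le_trans (lintegral_mono_ae step_a) (lintegral_liminf_le hF_meas)
  have hCφ_int : ∀ n, IntegrableOn (fun t => C - φ n t) (Ioo (0:ℝ) 1) := fun n =>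
    ((continuous_const.sub (hφ_cont n)).integrableOn_Icc).mono_set Ioo_subset_Icc_self
  have hFn_eq : ∀ n, ∫⁻ t in Ioo (0:ℝ) 1, F n t
      = ENNReal.ofReal (∫ t in Ioo (0:ℝ) 1, (C - φ n t)) := by
    intro n
    rw [MeasureTheory.ofReal_integral_eq_lintegral_ofReal (hCφ_int n)
      (Filter.Eventually.of_forall (fun t => by
        simp only [Pi.zero_apply]; linarith [hφ_leC n t]))]
  have hint_h : ∀ a b : ℝ, IntervalIntegrable h volume a b := fun a b =>
    hh_cont.intervalIntegrable a b
  have hφ_eval : ∀ n, ∫ t in Ioo (0:ℝ) 1, φ n t =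
      ((∫ t in (1:ℝ)..(1 + sn n), h t) - ∫ t in (0:ℝ)..(sn n), h t) / sn n := by
    intro n
    have e0 : ∫ t in Ioo (0:ℝ) 1, φ n t = ∫ t in (0:ℝ)..1, φ n t := by
      rw [intervalIntegral.integral_of_le zero_le_one,
        MeasureTheory.integral_Ioc_eq_integral_Ioo]
    rw [e0]
    have e1 : ∀ t, φ n t = (sn n)⁻¹ * (h (t + sn n) - h t) := fun t => by
      rw [hφ_def]; dsimp only; rw [div_eq_inv_mul]
    rw [intervalIntegral.integral_congr (g := fun t => (sn n)⁻¹ * (h (t + sn n) - h t))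
      (fun t _ => e1 t)]
    rw [intervalIntegral.integral_const_mul]
    have hint_h2 : IntervalIntegrable (fun t => h (t + sn n)) volume 0 1 :=
      (hh_cont.comp (continuous_id.add continuous_const)).intervalIntegrable _ _
    rw [intervalIntegral.integral_sub hint_h2 (hint_h _ _)]
    have e2 : ∫ t in (0:ℝ)..1, h (t + sn n) = ∫ t in (sn n)..(1 + sn n), h t := by
      simpa using intervalIntegral.integral_comp_add_right h (sn n)
    rw [e2]
    have e3 : ∫ t in (sn n)..(1+sn n), h t
        = (∫ t in (sn n)..(1:ℝ), h t) + ∫ t in (1:ℝ)..(1+sn n), h t :=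
      (intervalIntegral.integral_add_adjacent_intervals (hint_h _ _) (hint_h _ _)).symm
    have e4 : ∫ t in (0:ℝ)..1, h t
        = (∫ t in (0:ℝ)..(sn n), h t) + ∫ t in (sn n)..(1:ℝ), h t :=
      (intervalIntegral.integral_add_adjacent_intervals (hint_h _ _) (hint_h _ _)).symm
    rw [e3, e4, div_eq_inv_mul]
    ring
  have bnd : ∀ (a : ℝ) (n : ℕ), |(∫ t in a..(a + sn n), h t) - sn n * h a| ≤ C * sn n * sn n := by
    intro a n
    have e5 : (∫ t in a..(a + sn n), h t) - sn n * h a = ∫ t in a..(a + sn n), (h t - h a) := by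
      rw [intervalIntegral.integral_sub (hint_h _ _) intervalIntegrable_const,
        intervalIntegral.integral_const, add_sub_cancel_left, smul_eq_mul]
    rw [e5, ← Real.norm_eq_abs]
    have hb : ∀ x ∈ Set.uIoc a (a + sn n), ‖h x - h a‖ ≤ C * sn n := by
      intro x hx
      have hxI : x ∈ Ioc a (a + sn n) := by
        rwa [Set.uIoc_of_le (by linarith [hsn_pos n] : a ≤ a + sn n)] at hx
      rw [Real.norm_eq_abs]
      calc |h x - h a| ≤ C * |x - a| := hlip x a
        _ ≤ C * sn n := by
            apply mul_le_mul_of_nonneg_left _ hC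
            rw [abs_of_nonneg (by linarith [hxI.1] : (0:ℝ) ≤ x - a)]
            linarith [hxI.2]
    calc ‖∫ t in a..(a + sn n), (h t - h a)‖ ≤ C * sn n * |a + sn n - a| :=
          intervalIntegral.norm_integral_le_of_norm_le_const hb
      _ = C * sn n * sn n := by rw [add_sub_cancel_left, abs_of_pos (hsn_pos n)]
  have hquot_lim : Tendsto (fun n => ∫ t in Ioo (0:ℝ) 1, φ n t) atTop (𝓝 (h 1 - h 0)) := by
    have key : ∀ n, |(∫ t in Ioo (0:ℝ) 1, φ n t) - (h 1 - h 0)| ≤ 2*C*sn n := by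
      intro n
      have b1 := bnd 1 n
      have b2 := bnd 0 n
      rw [zero_add] at b2
      rw [hφ_eval n]
      have e6 : ((∫ t in (1:ℝ)..(1 + sn n), h t) - ∫ t in (0:ℝ)..(sn n), h t)/ sn n - (h 1 - h 0)
          = (((∫ t in (1:ℝ)..(1 + sn n), h t) - sn n * h 1)
              - ((∫ t in (0:ℝ)..(sn n), h t) - sn n * h 0)) / sn n := by
        linear_combination (h 1 - h 0) * mul_inv_cancel₀ (hsn_pos n).ne'
      rw [e6, abs_div, abs_of_pos (hsn_pos n), div_le_iff₀ (hsn_pos n)]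
      calc |((∫ t in (1:ℝ)..(1 + sn n), h t) - sn n * h 1)
              - ((∫ t in (0:ℝ)..(sn n), h t) - sn n * h 0)|
          ≤ |(∫ t in (1:ℝ)..(1 + sn n), h t) - sn n * h 1|
            + |(∫ t in (0:ℝ)..(sn n), h t) - sn n * h 0| := abs_sub _ _
        _ ≤ C * sn n * sn n + C * sn n * sn n := add_le_add b1 b2
        _ = 2*C*sn n * sn n := by ring
    have hz : Tendsto (fun n => 2*C*sn n) atTop (𝓝 0) := by
      simpa only [mul_zero] using hsn_lim.const_mul (2*C)
    have hz2 : Tendsto (fun n => (∫ t in Ioo (0:ℝ) 1, φ n t) - (h 1 - h 0)) atTop (𝓝 0) :=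
      squeeze_zero_norm (fun n => by rw [Real.norm_eq_abs]; exact key n) hz
    have := hz2.add (tendsto_const_nhds (x := h 1 - h 0))
    simpa using this
  have hCint : IntegrableOn (fun _ : ℝ => C) (Ioo (0:ℝ) 1) :=
    integrableOn_const (by simp [Real.volume_Ioo])
  have hvol : (volume (Ioo (0:ℝ) 1)).toReal = 1 := by simp [Real.volume_Ioo]
  have hCsub : ∀ n, ∫ t in Ioo (0:ℝ) 1, (C - φ n t) = C - ∫ t in Ioo (0:ℝ) 1, φ n t := by
    intro n
    rw [MeasureTheory.integral_sub hCint
      (((hφ_cont n).integrableOn_Icc).mono_set Ioo_subset_Icc_self),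
      MeasureTheory.setIntegral_const, measureReal_def, hvol, one_smul]
  have hlimF : Tendsto (fun n => ∫⁻ t in Ioo (0:ℝ) 1, F n t) atTop
      (𝓝 (ENNReal.ofReal (C - (h 1 - h 0)))) := by
    simp_rw [hFn_eq, hCsub]
    exact (ENNReal.continuous_ofReal.tendsto _).comp (tendsto_const_nhds.sub hquot_lim)
  have hliminf_eq : liminf (fun n => ∫⁻ t in Ioo (0:ℝ) 1, F n t) atTop
      = ENNReal.ofReal (C - (h 1 - h 0)) := hlimF.liminf_eq
  have hlhs : ∫⁻ t in Ioo (0:ℝ) 1, ENNReal.ofReal (C - g t)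
      = ENNReal.ofReal (C - ∫ t in Ioo (0:ℝ) 1, g t) := by
    have hsub : IntegrableOn (fun t => C - g t) (Ioo (0:ℝ) 1) := hCint.sub hg_int
    rw [← MeasureTheory.ofReal_integral_eq_lintegral_ofReal hsub ?_]
    · congr 1
      rw [MeasureTheory.integral_sub hCint hg_int, MeasureTheory.setIntegral_const, measureReal_def, hvol, one_smul]
    · rw [Filter.EventuallyLE, MeasureTheory.ae_restrict_iff' measurableSet_Ioo]
      exact Filter.Eventually.of_forall (fun t ht => by
        simp only [Pi.zero_apply]; linarith [hgC t ht])
  rw [hlhs, hliminf_eq] at fatou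
  have hb : 0 ≤ C - (h 1 - h 0) := by
    have h2 := hlip 1 0
    norm_num at h2
    have h1 : h 1 - h 0 ≤ |h 1 - h 0| := le_abs_self _
    linarith
  have hmain := (ENNReal.ofReal_le_ofReal_iff hb).1 fatou
  linarith

end Helpers3
section Helpers4

open Metric

variable {d : ℕ}

lemma ball_infDist_frontier_subset (S : SupSetup d) {x₀ : Euc d} (hx₀ : x₀ ∈ S.Ω)
    (hne : S.Ω ≠ univ) :
    Metric.ball x₀ (Metric.infDist x₀ (frontier S.Ω)) ⊆ S.Ω := by
  obtain ⟨y, hyf, heq⟩ := exists_mem_frontier_infDist_compl_eq_dist hx₀ hne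
  have h1 : Metric.infDist x₀ (frontier S.Ω) ≤ Metric.infDist x₀ S.Ωᶜ := by
    rw [heq]
    exact Metric.infDist_le_dist_of_mem hyf
  exact (Metric.ball_subset_ball h1).trans Metric.ball_infDist_compl_subset

lemma step2 (S : SupSetup d) (u : Euc d → ℝ) {x₀ : Euc d} (hx₀ : x₀ ∈ S.Ω) {Du : Euc d}
    (hdiff : HasGradientAt u Du x₀) {r : ℝ} (hr : 0 < r) (hball : Metric.ball x₀ r ⊆ S.Ω)
    {lam : ℝ} (hlam : 0 ≤ lam)
    (hprop : ∀ x ∈ Metric.ball x₀ r, ENNReal.ofReal (u x - u x₀) ≤ pdist S lam x₀ x) :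
    S.H x₀ Du ≤ lam := by
  have claim1 : ∀ q : Euc d, (inner ℝ Du q : ℝ) ≤ Lfun S lam x₀ q := by
    intro q
    by_contra hcon
    push_neg at hcon
    set c := (Lfun S lam x₀ q + (inner ℝ Du q : ℝ))/2 with hc_def
    have hc1 : Lfun S lam x₀ q < c := by rw [hc_def]; linarith
    have hc2 : c < (inner ℝ Du q : ℝ) := by rw [hc_def]; linarith
    have hc0 : 0 ≤ c := le_trans (lfun_nonneg S hx₀ hlam q) hc1.le
    obtain ⟨ρ, hρ, husc⟩ := lfun_usc S hx₀ hlam q hc1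
    have hq1 : (0:ℝ) < ‖q‖ + 1 := by positivity
    set t₀ := min (ρ/(‖q‖+1)) (r/(‖q‖+1)) with ht₀_def
    have ht₀ : 0 < t₀ := lt_min (by positivity) (by positivity)
    have hslope : ∀ t : ℝ, 0 < t → t < t₀ → u (x₀ + t • q) - u x₀ ≤ t * c := by
      intro t ht ht'
      have htρ : t * (‖q‖+1) < ρ :=
        (lt_div_iff₀ hq1).1 (lt_of_lt_of_le ht' (min_le_left _ _))
      have htr : t * (‖q‖+1) < r :=
        (lt_div_iff₀ hq1).1 (lt_of_lt_of_le ht' (min_le_right _ _))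
      set γ : ℝ → Euc d := fun s => x₀ + (s*t) • q with hγ_def
      have hdist : ∀ s : ℝ, dist (γ s) x₀ = |s*t| * ‖q‖ := fun s => by
        rw [hγ_def]
        dsimp only
        rw [dist_eq_norm, add_sub_cancel_left, norm_smul, Real.norm_eq_abs]
      have hmemball : ∀ s : ℝ, 0 ≤ s → s ≤ 1 → γ s ∈ Metric.ball x₀ r ∧ dist (γ s) x₀ < ρ := by
        intro s hs0 hs1
        have hd : dist (γ s) x₀ ≤ t * ‖q‖ := by
          rw [hdist s, abs_of_nonneg (mul_nonneg hs0 ht.le)]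
          nlinarith [mul_nonneg (mul_nonneg (sub_nonneg.2 hs1) ht.le) (norm_nonneg q)]
        have hlt : t * ‖q‖ < min ρ r := by
          apply lt_min <;> nlinarith [norm_nonneg q]
        constructor
        · exact mem_ball.2 (lt_of_le_of_lt hd (lt_of_lt_of_le hlt (min_le_right _ _)))
        · exact lt_of_le_of_lt hd (lt_of_lt_of_le hlt (min_le_left _ _))
      have hγlip : LipschitzWith (t*‖q‖).toNNReal γ := by
        apply LipschitzWith.of_dist_le_mul
        intro a b
        have he : γ a - γ b = ((a-b)*t) • q := by
          rw [hγ_def]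
          dsimp only
          rw [add_sub_add_left_eq_sub, ← sub_smul]
          ring_nf
        rw [dist_eq_norm, he, norm_smul, Real.norm_eq_abs, Real.coe_toNNReal _
          (by positivity : (0:ℝ) ≤ t*‖q‖), Real.dist_eq, abs_mul, abs_of_pos ht]
        ring_nf
        exact le_refl _
      have hγmem : ∀ s ∈ Icc (0:ℝ) 1, γ s ∈ S.Ω := fun s hs =>
        hball (hmemball s hs.1 hs.2).1
      have hγ0 : γ 0 = x₀ := by rw [hγ_def]; simp
      have hγ1 : γ 1 = x₀ + t • q := by rw [hγ_def]; simp
      have hpath : IsPathIn S.Ω x₀ (x₀ + t • q) γ :=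
        ⟨⟨_, hγlip⟩, hγmem, hγ0, hγ1⟩
      have hderiv : ∀ s : ℝ, deriv γ s = t • q := by
        intro s
        have h1 : HasDerivAt (fun s : ℝ => s*t) t s := hasDerivAt_mul_const t
        have h2 : HasDerivAt γ (t • q) s := by
          rw [hγ_def]
          exact (h1.smul_const q).const_add x₀
        exact h2.deriv
      have henergy : energy S lam γ ≤ t * c := by
        rw [energy]
        have htc : 0 ≤ t * c := mul_nonneg ht.le hc0
        have hbound : ∀ s ∈ Ioo (0:ℝ) 1, ‖Lfun S lam (γ s) (deriv γ s)‖ ≤ t * c := by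
          intro s hs
          have hmem := hmemball s hs.1.le hs.2.le
          have hsΩ : γ s ∈ S.Ω := hball hmem.1
          have husc' := husc (γ s) hsΩ hmem.2 q (by simpa using hρ)
          have h0 : 0 ≤ Lfun S lam (γ s) (deriv γ s) := lfun_nonneg S hsΩ hlam _
          rw [Real.norm_eq_abs, abs_of_nonneg h0, hderiv s]
          apply lfun_le S hsΩ hlam
          intro p hp
          have hpq : (inner ℝ p q : ℝ) ≤ c :=
            le_of_lt (lt_of_le_of_lt (inner_le_lfun S hsΩ hp q) husc')
          rw [real_inner_smul_right]
          exact mul_le_mul_of_nonneg_left hpq ht.le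
        have hmeas : AEStronglyMeasurable (fun s => Lfun S lam (γ s) (deriv γ s))
            (volume.restrict (Ioo (0:ℝ) 1)) :=
          (g_integrableOn S hlam hγlip hγmem).aestronglyMeasurable
        have hvol : volume (Ioo (0:ℝ) 1) < ⊤ := by simp [Real.volume_Ioo]
        have := MeasureTheory.norm_setIntegral_le_of_norm_le_const hvol hbound
        rw [Real.norm_eq_abs] at this
        have h2 : |∫ s in Ioo (0:ℝ) 1, Lfun S lam (γ s) (deriv γ s)| ≤ t * c := by
          apply this.trans
          simp [Real.volume_Ioo]
        exact le_trans (le_abs_self _) h2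
      have h1 := hprop (x₀ + t • q) (by
        rw [mem_ball, dist_eq_norm, add_sub_cancel_left, norm_smul, Real.norm_eq_abs,
          abs_of_pos ht]
        nlinarith [norm_nonneg q])
      have h2 : pdist S lam x₀ (x₀ + t•q) ≤ ENNReal.ofReal (energy S lam γ) :=
        iInf₂_le γ hpath
      have h3 : ENNReal.ofReal (u (x₀+t•q) - u x₀) ≤ ENNReal.ofReal (t*c) :=
        le_trans h1 (le_trans h2 (ENNReal.ofReal_le_ofReal henergy))
      exact (ENNReal.ofReal_le_ofReal_iff (mul_nonneg ht.le hc0)).1 h3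
    have hDq : HasDerivAt (fun t : ℝ => u (x₀ + t • q)) (inner ℝ Du q : ℝ) 0 := by
      have hF : HasFDerivAt u (InnerProductSpace.toDual ℝ (Euc d) Du) x₀ :=
        hasGradientAt_iff_hasFDerivAt.1 hdiff
      have hcv : HasDerivAt (fun t : ℝ => x₀ + t • q) q 0 := by
        simpa using ((hasDerivAt_id (0:ℝ)).smul_const q).const_add x₀
      have hF0 : HasFDerivAt u (InnerProductSpace.toDual ℝ (Euc d) Du) (x₀ + (0:ℝ) • q) := by
        simpa using hF
      have hcomp := hF0.comp_hasDerivAt 0 hcv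
      exact hcomp
    have hslopet : Tendsto (fun t : ℝ => (u (x₀ + t • q) - u x₀)/t) (𝓝[>] (0:ℝ))
        (𝓝 (inner ℝ Du q : ℝ)) := by
      have h1 := (hasDerivAt_iff_tendsto_slope.1 hDq).mono_left
        (nhdsWithin_mono (0:ℝ) (fun t ht => ne_of_gt ht))
      apply h1.congr'
      filter_upwards [self_mem_nhdsWithin] with t ht
      rw [slope_def_field]
      simp
    have hfinal : (inner ℝ Du q : ℝ) ≤ c := by
      apply le_of_tendsto hslopet
      filter_upwards [Ioo_mem_nhdsGT_of_mem (⟨le_refl (0:ℝ), ht₀⟩ : (0:ℝ) ∈ Ico (0:ℝ) t₀)]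
        with t ht
      rw [div_le_iff₀ ht.1]
      calc u (x₀ + t • q) - u x₀ ≤ t * c := hslope t ht.1 ht.2
        _ = c * t := by ring
    linarith
  have hclosed : IsClosed {p : Euc d | S.H x₀ p ≤ lam} :=
    isClosed_le (H_cont_x S hx₀) continuous_const
  have hconv : Convex ℝ {p : Euc d | S.H x₀ p ≤ lam} := S.H_quasiconvex x₀ hx₀ lam
  by_contra hcon
  have hnotmem : Du ∉ {p : Euc d | S.H x₀ p ≤ lam} := fun hmem => hcon hmem
  obtain ⟨f, v, hfs, hfx⟩ := geometric_hahn_banach_closed_point hconv hclosed hnotmem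
  set q := (InnerProductSpace.toDual ℝ (Euc d)).symm f with hq_def
  have hfq : ∀ p : Euc d, f p = (inner ℝ q p : ℝ) := by
    intro p
    have h1 : (InnerProductSpace.toDual ℝ (Euc d)) q = f :=
      (InnerProductSpace.toDual ℝ (Euc d)).apply_symm_apply f
    rw [← h1, InnerProductSpace.toDual_apply_apply]
  have h1 : Lfun S lam x₀ q ≤ v := by
    apply lfun_le S hx₀ hlam
    intro p hp
    rw [real_inner_comm, ← hfq p]
    exact (hfs p hp).le
  have h2 := claim1 q
  have h3 : v < (inner ℝ Du q : ℝ) := by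
    rw [real_inner_comm, ← hfq Du]
    exact hfx
  linarith

end Helpers4
section Helpers5

open Metric

variable {d : ℕ}

set_option maxHeartbeats 1000000 in
lemma Tr_nonempty (S : SupSetup d) (u : Euc d → ℝ) (hu : W1infC S u) {x₀ : Euc d}
    (hx₀ : x₀ ∈ S.Ω) (hne : S.Ω ≠ univ) {r : ℝ}
    (hr : r ∈ Ioo 0 (Metric.infDist x₀ (frontier S.Ω))) :
    {lam : ℝ | 0 ≤ lam ∧ ∀ x ∈ Metric.ball x₀ r,
      ENNReal.ofReal (u x - u x₀) ≤ pdist S lam x₀ x}.Nonempty := by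
  obtain ⟨hr0, hrR⟩ := hr
  set R := Metric.infDist x₀ (frontier S.Ω) with hR_def
  have hRball : Metric.ball x₀ R ⊆ S.Ω := ball_infDist_frontier_subset S hx₀ hne
  set r' := (r + R)/2 with hr'_def
  have hrr' : r < r' := by rw [hr'_def]; linarith
  have hr'R : r' < R := by rw [hr'_def]; linarith
  have hr'0 : 0 < r' := by linarith
  have hcb : Metric.closedBall x₀ r' ⊆ S.Ω := fun y hy =>
    hRball (mem_ball.2 (lt_of_le_of_lt (mem_closedBall.1 hy) hr'R))
  obtain ⟨K, hK⟩ := hu.1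
  obtain ⟨ε₀, hε₀, hballsub, hlipK⟩ := hK x₀ hx₀
  have hcomp : IsCompact (closure S.Ω) :=
    Metric.isCompact_of_isClosed_isBounded isClosed_closure S.isBounded_Ω.closure
  obtain ⟨B, hB⟩ := hcomp.exists_bound_of_continuousOn hu.2
  have hB0 : 0 ≤ B := le_trans (norm_nonneg _) (hB x₀ (subset_closure hx₀))
  set ε₁ := min ε₀ r with hε₁_def
  have hε₁ : 0 < ε₁ := lt_min hε₀ hr0
  set N := (K:ℝ) + (2*B + 2)/ε₁ with hN_def
  have hN0 : 0 ≤ N := by positivity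
  have hulip : ∀ x ∈ Metric.ball x₀ r, u x - u x₀ ≤ N * dist x x₀ := by
    intro x hx
    by_cases hcase : dist x x₀ < ε₀
    · have h1 := hlipK.dist_le_mul x (mem_ball.2 hcase) x₀ (mem_ball_self hε₀)
      rw [Real.dist_eq] at h1
      have h2 : u x - u x₀ ≤ (K:ℝ) * dist x x₀ := le_trans (le_abs_self _) h1
      calc u x - u x₀ ≤ (K:ℝ) * dist x x₀ := h2
        _ ≤ N * dist x x₀ := by
            apply mul_le_mul_of_nonneg_right _ dist_nonneg
            rw [hN_def]
            have h3 : (0:ℝ) ≤ (2*B + 2)/ε₁ := by positivity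
            linarith
    · have hd1 : ε₁ ≤ dist x x₀ := le_trans (min_le_left _ _) (not_lt.1 hcase)
      have hxΩ : x ∈ S.Ω := hRball (mem_ball.2 (lt_trans (mem_ball.1 hx) hrR))
      have h1 := hB x (subset_closure hxΩ)
      have h2 := hB x₀ (subset_closure hx₀)
      rw [Real.norm_eq_abs] at h1 h2
      have h2B : u x - u x₀ ≤ 2*B := by
        have h4 := le_abs_self (u x)
        have h5 := neg_abs_le (u x₀)
        linarith
      have hKnn : (0:ℝ) ≤ (K:ℝ) := K.coe_nonneg
      calc u x - u x₀ ≤ 2*B := h2B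
        _ = ((2*B)/ε₁) * ε₁ := by field_simp
        _ ≤ ((2*B+2)/ε₁) * dist x x₀ :=
            mul_le_mul ((div_le_div_iff_of_pos_right hε₁).2 (by linarith)) hd1 hε₁.le (by positivity)
        _ ≤ N * dist x x₀ := by
            apply mul_le_mul_of_nonneg_right _ dist_nonneg
            rw [hN_def]; linarith
  have hKset : IsCompact ((Metric.closedBall x₀ r') ×ˢ (Metric.closedBall (0:Euc d) N)) :=
    (isCompact_closedBall _ _).prod (isCompact_closedBall _ _)
  have hsubset : (Metric.closedBall x₀ r') ×ˢ (Metric.closedBall (0:Euc d) N)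
      ⊆ S.Ω ×ˢ (univ : Set (Euc d)) := prod_mono hcb (subset_univ _)
  obtain ⟨Λ, hΛ⟩ := hKset.exists_bound_of_continuousOn (S.H_cont.mono hsubset)
  set lam := max Λ 0 with hlam_def
  have hlam0 : 0 ≤ lam := le_max_right _ _
  have hsub_lam : ∀ x ∈ Metric.closedBall x₀ r', ∀ p : Euc d, ‖p‖ ≤ N → S.H x p ≤ lam := by
    intro x hx p hp
    have := hΛ (x,p) ⟨hx, mem_closedBall_zero_iff.2 hp⟩
    rw [Real.norm_eq_abs] at this
    exact le_trans (le_abs_self _) (le_trans this (le_max_left _ _))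
  refine ⟨lam, hlam0, ?_⟩
  intro x hxball
  apply le_iInf
  intro γ
  apply le_iInf
  intro hpath
  obtain ⟨⟨Kγ, hKγ⟩, hγmem, hγ0, hγ1⟩ := hpath
  obtain ⟨M, hM0, hM⟩ := S.H_coercive lam
  set g : ℝ → ℝ := fun t => Lfun S lam (γ t) (deriv γ t) with hg_def
  have hg_int : IntegrableOn g (Ioo (0:ℝ) 1) := g_integrableOn S hlam0 hKγ hγmem
  set C := (N + M + 1) * ((Kγ:ℝ) + 1) with hC_def
  have hKγ0 : (0:ℝ) ≤ (Kγ:ℝ) := Kγ.coe_nonneg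
  have hC0 : 0 ≤ C := mul_nonneg (by linarith) (by linarith)
  set f : Euc d → ℝ := fun y => N * min (dist y x₀) r' with hf_def
  have hflip : ∀ y z : Euc d, |f y - f z| ≤ N * dist y z := by
    intro y z
    rw [hf_def]
    dsimp only
    rw [← mul_sub, abs_mul, abs_of_nonneg hN0]
    apply mul_le_mul_of_nonneg_left _ hN0
    calc |min (dist y x₀) r' - min (dist z x₀) r'|
        ≤ max |dist y x₀ - dist z x₀| |r' - r'| := abs_min_sub_min_le_max _ _ _ _
      _ = |dist y x₀ - dist z x₀| := by simp
      _ ≤ dist y z := abs_dist_sub_le _ _ _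
  set h : ℝ → ℝ := fun t => f (γ t) with hh_def
  have hhlip : ∀ s t : ℝ, |h s - h t| ≤ C * |s - t| := by
    intro s t
    calc |h s - h t| ≤ N * dist (γ s) (γ t) := hflip _ _
      _ ≤ N * ((Kγ:ℝ) * dist s t) :=
          mul_le_mul_of_nonneg_left (hKγ.dist_le_mul s t) hN0
      _ ≤ C * |s - t| := by
          rw [Real.dist_eq, hC_def]
          nlinarith [mul_nonneg (mul_nonneg (by linarith : (0:ℝ) ≤ M+1)
            (by linarith : (0:ℝ) ≤ (Kγ:ℝ)+1)) (abs_nonneg (s - t)),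
            mul_nonneg hN0 (abs_nonneg (s - t))]
  have hgC : ∀ t ∈ Ioo (0:ℝ) 1, g t ≤ C := by
    intro t ht
    have htΩ : γ t ∈ S.Ω := hγmem t (Ioo_subset_Icc_self ht)
    calc g t ≤ M * ‖deriv γ t‖ :=
          lfun_le_mul S htΩ hlam0 hM0 (fun p hp => hM _ htΩ p hp) _
      _ ≤ M * (Kγ:ℝ) := mul_le_mul_of_nonneg_left (norm_deriv_le_lip hKγ t) hM0
      _ ≤ C := by rw [hC_def]; nlinarith
  have hquot : ∀ᵐ t ∂(volume.restrict (Ioo (0:ℝ) 1)), ∀ ε > (0:ℝ),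
      ∀ᶠ s in 𝓝[>] (0:ℝ), h (t+s) - h t ≤ (g t + ε) * s := by
    have hdiffae : ∀ᵐ t ∂(volume.restrict (Ioo (0:ℝ) 1)), DifferentiableAt ℝ γ t :=
      ae_restrict_of_ae hKγ.ae_differentiableAt
    filter_upwards [hdiffae, self_mem_ae_restrict measurableSet_Ioo] with t hdt htIoo
    intro ε hε
    have htΩ : γ t ∈ S.Ω := hγmem t (Ioo_subset_Icc_self htIoo)
    have hmap : Tendsto (fun s : ℝ => t + s) (𝓝[>] (0:ℝ)) (𝓝 t) := by
      have h1 : Tendsto (fun s : ℝ => t + s) (𝓝 (0:ℝ)) (𝓝 (t + 0)) :=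
        tendsto_const_nhds.add tendsto_id
      rw [add_zero] at h1
      exact h1.mono_left nhdsWithin_le_nhds
    by_cases hfar : r' < dist (γ t) x₀
    · have hopen : {y : Euc d | r' < dist y x₀} ∈ 𝓝 (γ t) :=
        (isOpen_lt continuous_const (continuous_id.dist continuous_const)).mem_nhds hfar
      have hγmap : Tendsto (fun s : ℝ => γ (t+s)) (𝓝[>] (0:ℝ)) (𝓝 (γ t)) :=
        Filter.Tendsto.comp (hKγ.continuous.continuousAt) hmap
      have hev : ∀ᶠ s in 𝓝[>] (0:ℝ), r' < dist (γ (t+s)) x₀ :=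
        hγmap.eventually hopen
      filter_upwards [hev, self_mem_nhdsWithin] with s hs hs0
      have hs0' : (0:ℝ) < s := hs0
      have h1 : h (t+s) = N * r' := by
        rw [hh_def, hf_def]
        dsimp only
        rw [min_eq_right hs.le]
      have h2 : h t = N * r' := by
        rw [hh_def, hf_def]
        dsimp only
        rw [min_eq_right hfar.le]
      rw [h1, h2, sub_self]
      have hgt0 : 0 ≤ g t := lfun_nonneg S htΩ hlam0 _
      apply mul_nonneg (by linarith) hs0'.le
    · push_neg at hfar
      set q := deriv γ t with hq_def
      have hgN : N * ‖q‖ ≤ g t := by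
        rcases eq_or_ne q 0 with hq | hq
        · rw [hq]
          simp only [norm_zero, mul_zero]
          exact lfun_nonneg S htΩ hlam0 _
        · have hqn : (0:ℝ) < ‖q‖ := norm_pos_iff.2 hq
          have hp : S.H (γ t) ((N/‖q‖) • q) ≤ lam := by
            apply hsub_lam (γ t) (mem_closedBall.2 hfar)
            rw [norm_smul, Real.norm_eq_abs, abs_of_nonneg (div_nonneg hN0 hqn.le),
              div_mul_cancel₀ _ hqn.ne']
          have h1 := inner_le_lfun S htΩ hp q
          have h2 : (inner ℝ ((N/‖q‖) • q) q : ℝ) = N * ‖q‖ := by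
            rw [real_inner_smul_left, real_inner_self_eq_norm_sq]
            field_simp
          rw [h2] at h1
          exact h1
      have hd : HasDerivAt γ q t := hdt.hasDerivAt
      have hN1 : (0:ℝ) < N + 1 := by linarith
      have hev : ∀ᶠ s in 𝓝[>] (0:ℝ), ‖γ (t+s) - γ t - s • q‖ ≤ (ε/(N+1)) * s := by
        have h1 := hasDerivAt_iff_tendsto.1 hd
        have h2 : ∀ᶠ x' in 𝓝 t, ‖x'-t‖⁻¹ * ‖γ x' - γ t - (x'-t) • q‖ < ε/(N+1) :=
          h1 (Iio_mem_nhds (by positivity))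
        filter_upwards [hmap.eventually h2, self_mem_nhdsWithin] with s hs hs0
        have hs0' : (0:ℝ) < s := hs0
        rw [add_sub_cancel_left, Real.norm_eq_abs, abs_of_pos hs0'] at hs
        calc ‖γ (t+s) - γ t - s • q‖ = s * (s⁻¹ * ‖γ (t+s) - γ t - s • q‖) := by
              field_simp
          _ ≤ s * (ε/(N+1)) := mul_le_mul_of_nonneg_left hs.le hs0'.le
          _ = (ε/(N+1)) * s := mul_comm _ _
      filter_upwards [hev, self_mem_nhdsWithin] with s hs hs0
      have hs0' : (0:ℝ) < s := hs0
      have hnorm : ‖γ (t+s) - γ t‖ ≤ ‖q‖ * s + (ε/(N+1)) * s := by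
        have h1 : γ (t+s) - γ t = s • q + (γ (t+s) - γ t - s • q) := by abel
        calc ‖γ (t+s) - γ t‖ = ‖s • q + (γ (t+s) - γ t - s • q)‖ := by rw [← h1]
          _ ≤ ‖s • q‖ + ‖γ (t+s) - γ t - s • q‖ := norm_add_le _ _
          _ ≤ ‖q‖ * s + (ε/(N+1)) * s := by
              rw [norm_smul, Real.norm_eq_abs, abs_of_pos hs0', mul_comm]
              exact add_le_add_right hs _
      have hNe : N * (ε/(N+1)) ≤ ε := by
        rw [show N * (ε/(N+1)) = ε * (N/(N+1)) by ring]
        calc ε * (N/(N+1)) ≤ ε * 1 :=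
              mul_le_mul_of_nonneg_left ((div_le_one hN1).2 (by linarith)) hε.le
          _ = ε := mul_one ε
      calc h (t+s) - h t ≤ |h (t+s) - h t| := le_abs_self _
        _ ≤ N * dist (γ (t+s)) (γ t) := hflip _ _
        _ = N * ‖γ (t+s) - γ t‖ := by rw [dist_eq_norm]
        _ ≤ N * (‖q‖ * s + (ε/(N+1)) * s) := mul_le_mul_of_nonneg_left hnorm hN0
        _ ≤ (g t + ε) * s := by
            have hb1 : (N * ‖q‖) * s ≤ g t * s := mul_le_mul_of_nonneg_right hgN hs0'.le
            have hb2 : (N * (ε/(N+1))) * s ≤ ε * s := mul_le_mul_of_nonneg_right hNe hs0'.le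
            calc N * (‖q‖ * s + (ε/(N+1)) * s)
                = (N * ‖q‖) * s + (N * (ε/(N+1))) * s := by ring
              _ ≤ g t * s + ε * s := add_le_add hb1 hb2
              _ = (g t + ε) * s := by ring
  have hkey := key_ftc hC0 hhlip hg_int hgC hquot
  have hh1 : h 1 = N * dist x x₀ := by
    rw [hh_def, hf_def]
    dsimp only
    rw [hγ1, min_eq_left (le_of_lt (lt_trans (mem_ball.1 hxball) hrr'))]
  have hh0 : h 0 = 0 := by
    rw [hh_def, hf_def]
    dsimp only
    rw [hγ0]
    simp [hr'0.le]
  have hfinal : u x - u x₀ ≤ energy S lam γ := by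
    calc u x - u x₀ ≤ N * dist x x₀ := hulip x hxball
      _ = h 1 - h 0 := by rw [hh1, hh0]; ring
      _ ≤ ∫ t in Ioo (0:ℝ) 1, g t := hkey
  exact ENNReal.ofReal_le_ofReal hfinal

end Helpers5
/-- if `u` is differentiable at `x₀` then
`H(x₀, Du(x₀)) ≤ H(x₀, Du)(x₀)`. -/
theorem stmt10 {d : ℕ} (S : SupSetup d) (u : Euc d → ℝ) (hu : W1infC S u)
    (x₀ : Euc d) (hx₀ : x₀ ∈ S.Ω) (Du : Euc d) (hdiff : HasGradientAt u Du x₀) :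
    S.H x₀ Du ≤ Hof S u x₀ := by
  have hHof_nonneg : 0 ≤ Hof S u x₀ := by
    apply Real.sInf_nonneg
    rintro b ⟨r, hrIoo, rfl⟩
    apply Real.sInf_nonneg
    rintro lam ⟨hlam0, -⟩
    exact hlam0
  rcases subsingleton_or_nontrivial (Euc d) with hsub | hnon
  · have hDu : Du = 0 := Subsingleton.elim _ _
    rw [hDu, S.H_zero x₀ hx₀]
    exact hHof_nonneg
  · have hne : S.Ω ≠ univ := by
      intro heq
      have hb := S.isBounded_Ω
      rw [heq] at hb
      exact NormedSpace.unbounded_univ ℝ (Euc d) hb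
    have hfront : (frontier S.Ω).Nonempty := nonempty_frontier_iff.2 ⟨⟨x₀, hx₀⟩, hne⟩
    have hxnot : x₀ ∉ frontier S.Ω := by
      rw [S.isOpen_Ω.frontier_eq]
      exact fun hmem => hmem.2 hx₀
    have hR : 0 < Metric.infDist x₀ (frontier S.Ω) :=
      (isClosed_frontier.notMem_iff_infDist_pos hfront).1 hxnot
    rw [Hof]
    apply le_csInf (Set.Nonempty.image _ (nonempty_Ioo.2 hR))
    rintro b ⟨r, hrIoo, rfl⟩
    rw [muFun]
    apply le_csInf (Tr_nonempty S u hu hx₀ hne hrIoo)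
    rintro lam ⟨hlam0, hprop⟩
    apply step2 S u hx₀ hdiff hrIoo.1 ?_ hlam0 hprop
    exact (Metric.ball_subset_ball hrIoo.2.le).trans
      (ball_infDist_frontier_subset S hx₀ hne)
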